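/- arXiv:1910.01461 — 3 statements merged into one kernel-verified Lean document; each statement's English description precedes it below -/
import Mathlib

section
/- Let A be a real r×s matrix with full row rank r ≤ s, λ its RGA with λ_{ij} = A_{ij}(Aᵀ(AAᵀ)⁻¹)_{ji}. Then every column sum satisfies 0 ≤ ∑_i λ_{ij} ≤ 1. -/
open Matrix

theorem rga_col_sum_mem_unit_interval {r s : ℕ} (hrs : r ≤ s)
    (A : Matrix (Fin r) (Fin s) ℝ) (hA : IsUnit (A * Aᵀ)) :
    ∀ j : Fin s, 0 ≤ ∑ i : Fin r, A i j * (Aᵀ * (A * Aᵀ)⁻¹) j i ∧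
      ∑ i : Fin r, A i j * (Aᵀ * (A * Aᵀ)⁻¹) j i ≤ 1 := by
  intro j
  set P : Matrix (Fin s) (Fin s) ℝ := Aᵀ * (A * Aᵀ)⁻¹ * A with hP
  have hsum : ∑ i : Fin r, A i j * (Aᵀ * (A * Aᵀ)⁻¹) j i = P j j := by
    simp [hP, Matrix.mul_apply, mul_comm]
  have hinv : (A * Aᵀ)⁻¹ * (A * Aᵀ) = 1 := Matrix.nonsing_inv_mul _ ((Matrix.isUnit_iff_isUnit_det _).mp hA)
  have hPidem : P * P = P := by
    have : P * P = Aᵀ * ((A * Aᵀ)⁻¹ * (A * Aᵀ)) * ((A * Aᵀ)⁻¹ * A) := by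
      simp [hP, Matrix.mul_assoc]
    rw [this, hinv]
    simp [hP, Matrix.mul_assoc]
  have hPsymm : Pᵀ = P := by
    have h1 : ((A * Aᵀ)⁻¹)ᵀ = (A * Aᵀ)⁻¹ := by
      rw [Matrix.transpose_nonsing_inv, Matrix.transpose_mul, Matrix.transpose_transpose]
    simp [hP, Matrix.transpose_mul, h1, Matrix.mul_assoc]
  have hdiag : P j j = ∑ k : Fin s, (P j k) ^ 2 := by
    conv_lhs => rw [← hPidem]
    rw [Matrix.mul_apply]
    refine Finset.sum_congr rfl fun k _ => ?_
    have : P k j = P j k := by conv_lhs => rw [← hPsymm, Matrix.transpose_apply]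
    rw [this]; ring
  have h0 : 0 ≤ P j j := by
    rw [hdiag]; exact Finset.sum_nonneg fun k _ => sq_nonneg _
  have hsq : (P j j) ^ 2 ≤ ∑ k : Fin s, (P j k) ^ 2 :=
    Finset.single_le_sum (fun k _ => sq_nonneg (P j k)) (Finset.mem_univ j)
  have h1 : P j j ≤ 1 := by nlinarith [hdiag, hsq]
  rw [hsum]
  exact ⟨h0, h1⟩
end

section
/- Permutation equivariance of the non-square RGA: let A be a real r×s matrix with full row rank, P_r an r×r permutation matrix and P_s an s×s permutation matrix. Then the RGA of P_r A P_s equals P_r λ P_s, where λ = A ∘ ((A⁺)ᵀ) is the RGA of A. -/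
open Matrix

lemma permMatrix_transpose {n : ℕ} (σ : Equiv.Perm (Fin n)) :
    (σ.permMatrix ℝ)ᵀ = (σ⁻¹).permMatrix ℝ := by
  rw [← PEquiv.toMatrix_symm, ← Equiv.toPEquiv_symm]
  rfl

lemma permMatrix_mul_transpose {n : ℕ} (σ : Equiv.Perm (Fin n)) :
    σ.permMatrix ℝ * (σ.permMatrix ℝ)ᵀ = 1 := by
  rw [permMatrix_transpose, PEquiv.toMatrix_toPEquiv_mul]
  ext i j
  simp [PEquiv.toMatrix_apply, Equiv.toPEquiv_apply, one_apply, Equiv.eq_symm_apply]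

lemma transpose_mul_permMatrix {n : ℕ} (σ : Equiv.Perm (Fin n)) :
    (σ.permMatrix ℝ)ᵀ * σ.permMatrix ℝ = 1 := by
  have h := permMatrix_mul_transpose σ⁻¹
  rw [permMatrix_transpose, inv_inv] at h
  rw [permMatrix_transpose]
  exact h

theorem rga_permutation_equivariant {r s : ℕ}
    (A : Matrix (Fin r) (Fin s) ℝ) (hA : IsUnit (A * Aᵀ))
    (σ : Equiv.Perm (Fin r)) (τ : Equiv.Perm (Fin s)) :
    Matrix.hadamard (σ.permMatrix ℝ * A * τ.permMatrix ℝ)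
        ((σ.permMatrix ℝ * A * τ.permMatrix ℝ)ᵀ *
          ((σ.permMatrix ℝ * A * τ.permMatrix ℝ) *
            (σ.permMatrix ℝ * A * τ.permMatrix ℝ)ᵀ)⁻¹)ᵀ
      = σ.permMatrix ℝ * Matrix.hadamard A (Aᵀ * (A * Aᵀ)⁻¹)ᵀ * τ.permMatrix ℝ := by
  set P := σ.permMatrix ℝ
  set Q := τ.permMatrix ℝ
  have hPPt : P * Pᵀ = 1 := permMatrix_mul_transpose σ
  have hPtP : Pᵀ * P = 1 := transpose_mul_permMatrix σ
  have hQQt : Q * Qᵀ = 1 := permMatrix_mul_transpose τ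
  have hPinv : P⁻¹ = Pᵀ := Matrix.inv_eq_right_inv hPPt
  have hPtinv : Pᵀ⁻¹ = P := Matrix.inv_eq_right_inv hPtP
  have hq : ∀ {m : Type} (X : Matrix (Fin s) m ℝ), Q * (Qᵀ * X) = X := by
    intro m X; rw [← Matrix.mul_assoc, hQQt, Matrix.one_mul]
  have hp : ∀ {m : Type} (X : Matrix (Fin r) m ℝ), Pᵀ * (P * X) = X := by
    intro m X; rw [← Matrix.mul_assoc, hPtP, Matrix.one_mul]
  have h1 : (P * A * Q) * (P * A * Q)ᵀ = P * (A * Aᵀ) * Pᵀ := by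
    rw [transpose_mul, transpose_mul]
    simp only [Matrix.mul_assoc]
    rw [hq]
  have h2 : ((P * A * Q) * (P * A * Q)ᵀ)⁻¹ = P * (A * Aᵀ)⁻¹ * Pᵀ := by
    rw [h1, Matrix.mul_inv_rev, Matrix.mul_inv_rev, hPinv, hPtinv, mul_assoc]
  have h3 : (P * A * Q)ᵀ * ((P * A * Q) * (P * A * Q)ᵀ)⁻¹
      = Qᵀ * (Aᵀ * (A * Aᵀ)⁻¹) * Pᵀ := by
    rw [h2, transpose_mul, transpose_mul]
    simp only [Matrix.mul_assoc]
    rw [hp]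
  rw [h3]
  set N := (Aᵀ * (A * Aᵀ)⁻¹)ᵀ
  have h4 : (Qᵀ * (Aᵀ * (A * Aᵀ)⁻¹) * Pᵀ)ᵀ = P * N * Q := by
    simp [N, Matrix.transpose_mul, Matrix.mul_assoc]
  rw [h4]
  have hsub : ∀ (M : Matrix (Fin r) (Fin s) ℝ), P * M * Q = M.submatrix σ τ.symm := by
    intro M
    rw [PEquiv.toMatrix_toPEquiv_mul, PEquiv.mul_toMatrix_toPEquiv]
    rfl
  rw [hsub, hsub, hsub]
  ext i j
  simp [Matrix.hadamard]
end

section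
/- The RGA formula via the Gram determinant: for a full-row-rank real r×s matrix A (r ≤ s), the RGA entries satisfy λ_{ij} = A_{ij}·((AAᵀ)⁻¹A)_{ij} = (1/2)·(A_{ij}/det(AAᵀ))·∂(det(AAᵀ))/∂A_{ij}. -/
/-!
Jacobi's formula gives `d/dt det G(t) = tr (adj G · G')`. Moving the entry `A i j` moves the Gram
matrix `G = A Aᵀ` with velocity `E Aᵀ + A Eᵀ`, `E` the matrix unit at `(i, j)`; since `adj G` is
symmetric both terms contribute `(adj G · A) i j`, and `adj G = det G • G⁻¹`. The Hadamard form of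
the RGA entry only uses `(Aᵀ G⁻¹)ᵀ = G⁻¹ A`, again by symmetry of `G`.
-/

open Matrix

namespace Matrix

open Finset Equiv

section Algebra

variable {R : Type*} [CommRing R] {n : Type*} [Fintype n]

theorem IsSymm.trace_mul_transpose {S : Matrix n n R} (hS : S.IsSymm) (X : Matrix n n R) :
    trace (S * Xᵀ) = trace (S * X) := by
  rw [← trace_transpose, transpose_mul, transpose_transpose, hS.eq, trace_mul_comm]

variable [DecidableEq n]

theorem prod_updateCol_perm (M : Matrix n n R) (c : n → R) (σ : Perm n) (k : n) :
    ∏ l, M.updateCol k c (σ l) l = (∏ l ∈ univ.erase k, M (σ l) l) * c (σ k) := by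
  rw [← mul_prod_erase _ _ (mem_univ k), updateCol_self, mul_comm]
  congr 1
  exact prod_congr rfl fun l hl => updateCol_ne (ne_of_mem_erase hl)

theorem trace_adjugate_mul_eq_sum_perm (M M' : Matrix n n R) :
    trace (adjugate M * M') = ∑ σ : Perm n, ((Perm.sign σ : ℤ) : R) *
      ∑ k, (∏ l ∈ univ.erase k, M (σ l) l) * M' (σ k) k := by
  have hdiag : ∀ k, (adjugate M * M') k k = ∑ σ : Perm n, ((Perm.sign σ : ℤ) : R) *
      ((∏ l ∈ univ.erase k, M (σ l) l) * M' (σ k) k) := by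
    intro k
    change (adjugate M *ᵥ fun p => M' p k) k = _
    simp_rw [← cramer_eq_adjugate_mulVec, cramer_apply, det_apply, prod_updateCol_perm,
      Units.smul_def, zsmul_eq_mul]
  simp_rw [mul_sum]
  rw [sum_comm]
  exact sum_congr rfl fun k _ => hdiag k

end Algebra

variable {𝕜 : Type*} [NontriviallyNormedField 𝕜] {l m n : Type*}

theorem hasDerivAt_updateRow_update_apply [DecidableEq l] [DecidableEq m] (A : Matrix l m 𝕜)
    (i : l) (j : m) (x : 𝕜) (p : l) (q : m) :
    HasDerivAt (fun t => A.updateRow i (Function.update (A i) j t) p q) (single i j 1 p q) x := by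
  simp only [updateRow_apply, Function.update_apply, single_apply]
  split_ifs <;> simp_all [hasDerivAt_id', hasDerivAt_const]

variable [Fintype m] {x : 𝕜}

theorem hasDerivAt_mul_apply {B : 𝕜 → Matrix l m 𝕜} {C : 𝕜 → Matrix m n 𝕜}
    {B' : Matrix l m 𝕜} {C' : Matrix m n 𝕜}
    (hB : ∀ p q, HasDerivAt (fun t => B t p q) (B' p q) x)
    (hC : ∀ p q, HasDerivAt (fun t => C t p q) (C' p q) x) (p : l) (q : n) :
    HasDerivAt (fun t => (B t * C t) p q) ((B' * C x + B x * C') p q) x := by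
  simp only [mul_apply, add_apply, ← sum_add_distrib]
  exact HasDerivAt.fun_sum fun k _ => (hB p k).mul (hC k q)

variable [Fintype n] [DecidableEq n]

theorem hasDerivAt_det {M : 𝕜 → Matrix n n 𝕜} {M' : Matrix n n 𝕜}
    (hM : ∀ p q, HasDerivAt (fun t => M t p q) (M' p q) x) :
    HasDerivAt (fun t => (M t).det) (trace (adjugate (M x) * M')) x := by
  have hprod : ∀ σ : Perm n, HasDerivAt (fun t => ∏ l, M t (σ l) l)
      (∑ k, (∏ l ∈ univ.erase k, M x (σ l) l) * M' (σ k) k) x := fun σ => by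
    simpa using HasDerivAt.fun_finsetProd fun l _ => hM (σ l) l
  simp_rw [det_apply, Units.smul_def, zsmul_eq_mul, trace_adjugate_mul_eq_sum_perm]
  exact HasDerivAt.fun_sum fun σ _ => (hprod σ).const_mul _

theorem hasDerivAt_det_mul_transpose_self {B : 𝕜 → Matrix n m 𝕜} {B' : Matrix n m 𝕜}
    (hB : ∀ p q, HasDerivAt (fun t => B t p q) (B' p q) x) :
    HasDerivAt (fun t => (B t * (B t)ᵀ).det)
      (2 * trace (adjugate (B x * (B x)ᵀ) * B x * B'ᵀ)) x := by
  have hsymm : (adjugate (B x * (B x)ᵀ)).IsSymm := IsSymm.adjugate (transpose_mul _ _)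
  convert hasDerivAt_det (M := fun t => B t * (B t)ᵀ)
    (hasDerivAt_mul_apply (C := fun t => (B t)ᵀ) (C' := B'ᵀ) hB fun p q => hB q p) using 1
  rw [Matrix.mul_add, trace_add, ← transpose_transpose B', ← transpose_mul,
    hsymm.trace_mul_transpose, transpose_transpose, Matrix.mul_assoc]
  ring

end Matrix

theorem rga_via_gram_det_general {r s : ℕ}
    (A : Matrix (Fin r) (Fin s) ℝ) (hA : IsUnit (A * Aᵀ)) (i : Fin r) (j : Fin s) :
    (Matrix.hadamard A (Aᵀ * (A * Aᵀ)⁻¹)ᵀ) i j = A i j * ((A * Aᵀ)⁻¹ * A) i j ∧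
    A i j * ((A * Aᵀ)⁻¹ * A) i j =
      (1 / 2) * (A i j / (A * Aᵀ).det) *
        deriv
          (fun t : ℝ =>
            ((A.updateRow i (Function.update (A i) j t)) *
              (A.updateRow i (Function.update (A i) j t))ᵀ).det)
          (A i j) := by
  have hsymm : (A * Aᵀ).IsSymm := transpose_mul _ _
  have hdet : (A * Aᵀ).det ≠ 0 := ((isUnit_iff_isUnit_det _).mp hA).ne_zero
  have hderiv := hasDerivAt_det_mul_transpose_self (hasDerivAt_updateRow_update_apply A i j (A i j))
  simp only [Function.update_eq_self, updateRow_eq_self, transpose_single, trace_mul_single,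
    MulOpposite.op_one, one_smul] at hderiv
  refine ⟨?_, ?_⟩
  · rw [hadamard_apply, transpose_mul, transpose_nonsing_inv, hsymm.eq, transpose_transpose]
  · rw [hderiv.deriv, inv_def, Ring.inverse_eq_inv', smul_mul, Matrix.smul_apply, smul_eq_mul]
    field_simp

theorem rga_via_gram_det {r s : ℕ} (hrs : r ≤ s)
    (A : Matrix (Fin r) (Fin s) ℝ) (hA : IsUnit (A * Aᵀ)) (i : Fin r) (j : Fin s) :
    (Matrix.hadamard A (Aᵀ * (A * Aᵀ)⁻¹)ᵀ) i j = A i j * ((A * Aᵀ)⁻¹ * A) i j ∧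
    A i j * ((A * Aᵀ)⁻¹ * A) i j =
      (1 / 2) * (A i j / (A * Aᵀ).det) *
        deriv
          (fun t : ℝ =>
            ((A.updateRow i (Function.update (A i) j t)) *
              (A.updateRow i (Function.update (A i) j t))ᵀ).det)
          (A i j) :=
  rga_via_gram_det_general A hA i j
end
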